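/- arXiv:2404.11024 — 7 statements merged into one kernel-verified Lean document; each statement's English description precedes it below -/
import Mathlib

section
/- Let L be a symmetric positive definite m×m real matrix and let K := L(L + I)^{-1}. Then for every subset J ⊆ {1,…,m}, ∑_{A : J ⊆ A ⊆ {1,…,m}} det(L_A) = det(K_J) · det(L + I). Equivalently, if Y is a random subset with distribution P_L(A) = det(L_A)/det(L + I), then P_L(J ⊆ Y) = E_{P_L}[1_{J⊆Y}] = det(K_J); i.e., the expectation parameters η_J of the log-linear embedding of the determinantal point process, evaluated at P_L, equal the principal minors det(K_J) of the marginal kernel K. -/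
/-!
Expanding `det (L + D)` multilinearly in the rows, where `D` is the diagonal 0/1 matrix supported
off `J`, shows that the minors `det L_A` with `J ⊆ A` add up to `det (L + 1 - P_J)`, with `P_J` the
coordinate projection onto `J`. Since `K (L + 1) = L`, this matrix factors as `B (L + 1)`, where
`B` has the rows of `K` indexed by `J` and identity rows elsewhere, so that `det B = det K_J`.
-/

/-- The determinant of the principal submatrix of `M` with rows and columns in `A`
(equal to `1` when `A = ∅`). -/
noncomputable def pminor {m : ℕ} (M : Matrix (Fin m) (Fin m) ℝ) (A : Finset (Fin m)) : ℝ :=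
  (M.submatrix (fun i : A => (i : Fin m)) (fun j : A => (j : Fin m))).det

/-- The `L`-ensemble determinantal point process. -/
noncomputable def dppP {m : ℕ} (L : Matrix (Fin m) (Fin m) ℝ) (A : Finset (Fin m)) : ℝ :=
  pminor L A / (L + 1).det

namespace Matrix

variable {n R : Type*} [Fintype n] [DecidableEq n] [CommRing R]

theorem sum_det_submatrix_of_superset (M : Matrix n n R) (J : Finset n) :
    ∑ s : Finset n, (if J ⊆ s then (M.submatrix ((↑) : s → n) (↑)).det else 0) =
      (M + (1 - diagonal fun i => if i ∈ J then 1 else 0)).det := by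
  set D : Matrix n n R := 1 - diagonal fun i => if i ∈ J then 1 else 0
  rw [show (M + D).det = detRowAlternating (M.row + D.row) from rfl,
    AlternatingMap.map_add_univ]
  refine Finset.sum_congr rfl fun s _ => ?_
  split_ifs with hJs
  · rw [← det_piecewise_one_eq_submatrix_det]
    congr 2
    refine s.piecewise_congr (fun _ _ => rfl) fun i hi => ?_
    ext j
    have hiJ : i ∉ J := fun h => hi (hJs h)
    simp [D, diagonal, one_apply, hiJ]
  · obtain ⟨i, hiJ, his⟩ := Finset.not_subset.mp hJs
    refine (det_eq_zero_of_row_eq_zero i fun j => ?_).symm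
    simp [D, Finset.piecewise, his, row, diagonal, one_apply, hiJ]

theorem det_sub_diagonal_eq_det_submatrix_mul {K N : Matrix n n R} (hKN : K * N = N - 1)
    (J : Finset n) :
    (N - diagonal fun i => if i ∈ J then 1 else 0).det =
      (K.submatrix ((↑) : J → n) (↑)).det * N.det := by
  have hrows : of (J.piecewise K.row (1 : Matrix n n R).row) * N =
      N - diagonal fun i => if i ∈ J then 1 else 0 := by
    ext i j
    by_cases hi : i ∈ J
    · calc (of (J.piecewise K.row (1 : Matrix n n R).row) * N) i j = (K * N) i j := by
            simp [mul_apply, Finset.piecewise, hi, row]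
        _ = _ := by
          rw [hKN]
          rcases eq_or_ne i j with rfl | _ <;> simp [*]
    · simp [mul_apply, Finset.piecewise, hi, row, diagonal, one_apply]
  rw [← hrows, det_mul, det_piecewise_one_eq_submatrix_det]

end Matrix

theorem dpp_marginal_kernel_general (m : ℕ) (L : Matrix (Fin m) (Fin m) ℝ)
    (hL : L.PosDef)
    (K : Matrix (Fin m) (Fin m) ℝ) (hK : K = L * (L + 1)⁻¹) (J : Finset (Fin m)) :
    (∑ A : Finset (Fin m), (if J ⊆ A then pminor L A else 0)
        = pminor K J * (L + 1).det) ∧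
    (∑ A : Finset (Fin m), dppP L A * (if J ⊆ A then 1 else 0) = pminor K J) := by
  have hdet : (L + 1).det ≠ 0 := (hL.add Matrix.PosDef.one).det_pos.ne'
  have hKN : K * (L + 1) = L + 1 - 1 := by
    rw [hK, Matrix.mul_assoc, Matrix.nonsing_inv_mul _ hdet.isUnit, mul_one,
      add_sub_cancel_right]
  have hsum : ∑ A, (if J ⊆ A then pminor L A else 0) = pminor K J * (L + 1).det := by
    rw [pminor, ← Matrix.det_sub_diagonal_eq_det_submatrix_mul hKN, add_sub_assoc]
    exact Matrix.sum_det_submatrix_of_superset L J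
  refine ⟨hsum, ?_⟩
  calc ∑ A, dppP L A * (if J ⊆ A then 1 else 0)
      = (∑ A, if J ⊆ A then pminor L A else 0) / (L + 1).det := by
        rw [Finset.sum_div]
        refine Finset.sum_congr rfl fun A _ => ?_
        split_ifs <;> simp [dppP]
    _ = pminor K J := by rw [hsum, mul_div_cancel_right₀ _ hdet]

theorem dpp_marginal_kernel (m : ℕ) (L : Matrix (Fin m) (Fin m) ℝ)
    (hsymm : L.IsSymm) (hL : L.PosDef)
    (K : Matrix (Fin m) (Fin m) ℝ) (hK : K = L * (L + 1)⁻¹) (J : Finset (Fin m)) :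
    (∑ A : Finset (Fin m), (if J ⊆ A then pminor L A else 0)
        = pminor K J * (L + 1).det) ∧
    (∑ A : Finset (Fin m), dppP L A * (if J ⊆ A then 1 else 0) = pminor K J) :=
  dpp_marginal_kernel_general m L hL K hK J
end

section
/- Fix a symmetric positive definite m×m real matrix R with unit diagonal. Then for every u ∈ ℝ^m and every index a ∈ {1,…,m}, the conditional potential function ψ(u) := log det(L(u) + I) has a partial derivative with respect to u_a at u, and ∂ψ/∂u_a (u) = K(u)_{aa}, the (a,a)-entry of the marginal kernel K(u) := L(u)(L(u) + I)^{-1}. (This is the duality formula η_{α₁} = ∂ψ/∂u^{α₁} relating the L-ensemble parameterization to the marginal kernel.) -/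
/-!
Moving `u` to `v` conjugates `L` by the diagonal matrix `E = diag(e^{(v_i - u_i)/2})`, and by
Sylvester's identity `det(E L E + I) = det(E² L + I)`. For `v = u + s e_a` the matrix `E² - I` is
`(e^s - 1) e_a e_aᵀ`, so the matrix determinant lemma gives
`det(L(v) + I) = det(L(u) + I) · (1 + (e^s - 1) K(u)_{aa})`; differentiating `log` of this at
`s = 0` yields `K(u)_{aa}`.
-/

/-- The kernel `L(u) = D(u) R D(u)` with `D(u) = diag(e^{u₁/2}, …, e^{u_m/2})`. -/
noncomputable def Lmat {m : ℕ} (R : Matrix (Fin m) (Fin m) ℝ) (u : Fin m → ℝ) :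
    Matrix (Fin m) (Fin m) ℝ :=
  Matrix.diagonal (fun i => Real.exp (u i / 2)) * R *
    Matrix.diagonal (fun i => Real.exp (u i / 2))

/-- The conditional potential function `ψ(u) = log det(L(u) + I)`. -/
noncomputable def psi {m : ℕ} (R : Matrix (Fin m) (Fin m) ℝ) (u : Fin m → ℝ) : ℝ :=
  Real.log (Lmat R u + 1).det

/-- The marginal kernel `K(u) = L(u)(L(u) + I)⁻¹`. -/
noncomputable def Kmat {m : ℕ} (R : Matrix (Fin m) (Fin m) ℝ) (u : Fin m → ℝ) :
    Matrix (Fin m) (Fin m) ℝ :=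
  Lmat R u * (Lmat R u + 1)⁻¹

open Matrix Real

namespace Matrix

variable {n α : Type*} [Fintype n] [DecidableEq n] [CommRing α]

theorem det_diagonal_mul_mul_diagonal_add_one (d : n → α) (M : Matrix n n α) :
    (diagonal d * M * diagonal d + 1).det = (diagonal (fun i => d i * d i) * M + 1).det := by
  rw [det_mul_add_one_comm, ← Matrix.mul_assoc, diagonal_mul_diagonal]

theorem det_add_single_mul {A : Matrix n n α} (hA : IsUnit A.det) (a : n) (c : α)
    (M : Matrix n n α) :
    (A + single a a c * M).det = A.det * (1 + c * (M * A⁻¹) a a) := by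
  have hrankOne :
      single a a c * M = replicateCol Unit (Pi.single a c) * replicateRow Unit (M a) := by
    rw [← vecMulVec_eq]
    ext i j
    by_cases h : i = a
    · subst h; simp [single_mul_apply_same, vecMulVec_apply]
    · simp [single_mul_apply_of_ne (h := h), vecMulVec_apply, h]
  rw [hrankOne, det_add_mul _ _ hA, det_unique (n := Unit)]
  simp [Matrix.mul_apply, Pi.single_apply, mul_comm]

end Matrix

section Lmat

variable {m : ℕ} {R : Matrix (Fin m) (Fin m) ℝ}

theorem diagonal_exp_update_sub (u : Fin m → ℝ) (a : Fin m) (t : ℝ) :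
    diagonal (fun i => exp (Function.update u a t i - u i)) =
      1 + single a a (exp (t - u a) - 1) := by
  ext i j
  by_cases hij : i = j
  · subst hij
    by_cases h : i = a
    · subst h; simp
    · simp [h, Ne.symm h]
  · rw [diagonal_apply_ne _ hij, Matrix.add_apply, one_apply_ne hij, single_apply, if_neg]
    · simp
    · rintro ⟨rfl, rfl⟩; exact hij rfl

theorem Lmat_eq_diagonal_mul_Lmat_mul_diagonal (u v : Fin m → ℝ) :
    Lmat R v = diagonal (fun i => exp ((v i - u i) / 2)) * Lmat R u *
      diagonal (fun i => exp ((v i - u i) / 2)) := by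
  simp only [Lmat, Matrix.mul_assoc, diagonal_mul_diagonal]
  simp only [← Matrix.mul_assoc, diagonal_mul_diagonal, ← exp_add]
  ring_nf

theorem Lmat_posSemidef (hR : R.PosSemidef) (u : Fin m → ℝ) : (Lmat R u).PosSemidef := by
  simpa [Lmat, diagonal_conjTranspose] using
    hR.mul_mul_conjTranspose_same (diagonal fun i => exp (u i / 2))

theorem Lmat_add_one_posDef (hR : R.PosSemidef) (u : Fin m → ℝ) : (Lmat R u + 1).PosDef :=
  PosDef.posSemidef_add (Lmat_posSemidef hR u) PosDef.one

theorem det_Lmat_update_add_one (u : Fin m → ℝ) (hu : IsUnit (Lmat R u + 1).det) (a : Fin m)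
    (t : ℝ) :
    (Lmat R (Function.update u a t) + 1).det =
      (Lmat R u + 1).det * (1 + (exp (t - u a) - 1) * Kmat R u a a) := by
  rw [Lmat_eq_diagonal_mul_Lmat_mul_diagonal u, det_diagonal_mul_mul_diagonal_add_one]
  simp_rw [← exp_add, add_halves]
  rw [diagonal_exp_update_sub, Matrix.add_mul, Matrix.one_mul, add_right_comm,
    det_add_single_mul hu, Kmat]

end Lmat

theorem hasDerivAt_log_mul_one_add_exp_sub_one_mul {c : ℝ} (hc : c ≠ 0) (k x : ℝ) :
    HasDerivAt (fun t => log (c * (1 + (exp (t - x) - 1) * k))) k x := by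
  have hg := ((((hasDerivAt_id' x).sub_const x).exp.sub_const 1).mul_const k).const_add 1
    |>.const_mul c
  convert hg.log (by simpa using hc) using 1
  field_simp
  simp

theorem partial_deriv_psi_eq_marginal_kernel_diag_general (m : ℕ)
    (R : Matrix (Fin m) (Fin m) ℝ) (hR : R.PosDef)
    (u : Fin m → ℝ) (a : Fin m) :
    HasDerivAt (fun t : ℝ => psi R (Function.update u a t)) (Kmat R u a a) (u a) := by
  have hdet := (Lmat_add_one_posDef hR.posSemidef u).det_pos
  have hpsi : (fun t => psi R (Function.update u a t)) =
      fun t => log ((Lmat R u + 1).det * (1 + (exp (t - u a) - 1) * Kmat R u a a)) := by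
    funext t
    rw [psi, det_Lmat_update_add_one u hdet.ne'.isUnit]
  rw [hpsi]
  exact hasDerivAt_log_mul_one_add_exp_sub_one_mul hdet.ne' _ _

theorem partial_deriv_psi_eq_marginal_kernel_diag (m : ℕ)
    (R : Matrix (Fin m) (Fin m) ℝ) (hsymm : R.IsSymm) (hR : R.PosDef)
    (hdiag : ∀ i, R i i = 1) (u : Fin m → ℝ) (a : Fin m) :
    HasDerivAt (fun t : ℝ => psi R (Function.update u a t)) (Kmat R u a a) (u a) :=
  partial_deriv_psi_eq_marginal_kernel_diag_general m R hR u a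
end

section
/- Let L be a symmetric positive definite m×m real matrix with marginal kernel K := L(L + I)^{-1}, and let Y ∼ P_L. Then for any subsets I, J ⊆ {1,…,m}, the covariance of the indicators 1_{I⊆Y} and 1_{J⊆Y} under P_L equals det(K_{I∪J}) − det(K_I)·det(K_J); that is, ∑_{A⊆{1,…,m}} P_L(A)·1_{I⊆A}·1_{J⊆A} − (∑_{A} P_L(A)·1_{I⊆A})(∑_{A} P_L(A)·1_{J⊆A}) = det(K_{I∪J}) − det(K_I)·det(K_J). (This is the Fisher information of the ambient log-linear model with respect to the canonical parameters, evaluated at a determinantal point process.) -/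
open Matrix Finset in
lemma det_eq_pminor_row {m : ℕ} (M : Matrix (Fin m) (Fin m) ℝ) (s : Finset (Fin m))
    (h : ∀ i ∉ s, M i = Pi.single i 1) : M.det = pminor M s := by
  classical
  let e : {x // x ∈ s} ⊕ {x // ¬ x ∈ s} ≃ Fin m := Equiv.sumCompl _
  rw [← Matrix.det_submatrix_equiv_self e M]
  have he : M.submatrix e e = Matrix.fromBlocks
      (M.submatrix (fun i : {x // x ∈ s} => (i : Fin m)) (fun j : {x // x ∈ s} => (j : Fin m)))
      (M.submatrix (fun i : {x // x ∈ s} => (i : Fin m)) (fun j : {x // ¬ x ∈ s} => (j : Fin m)))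
      0 1 := by
    ext i j
    cases i with
    | inl i =>
      cases j with
      | inl j => rfl
      | inr j => rfl
    | inr i =>
      have hrow := h i i.2
      cases j with
      | inl j =>
        have : (i : Fin m) ≠ (j : Fin m) := fun hc => i.2 (hc ▸ j.2)
        simp [e, Matrix.submatrix, hrow, Pi.single_apply, this.symm]
      | inr j =>
        simp only [e, Equiv.sumCompl_apply_inr, Matrix.submatrix_apply, hrow,
          Matrix.fromBlocks_apply₂₂, Pi.single_apply, Matrix.one_apply]
        by_cases hij : (i : {x // ¬ x ∈ s}) = j
        · simp [hij]
        · have : (j : Fin m) ≠ (i : Fin m) := fun hc => hij (Subtype.ext hc.symm)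
          simp [this, fun hc : i = j => hij (Subtype.ext (congrArg Subtype.val hc)), hij,
            Subtype.ext_iff]
  rw [he, Matrix.det_fromBlocks_zero₂₁, Matrix.det_one, mul_one]
  rfl

open Matrix Finset in
lemma pminor_transpose {m : ℕ} (M : Matrix (Fin m) (Fin m) ℝ) (s : Finset (Fin m)) :
    pminor Mᵀ s = pminor M s := by
  unfold pminor
  rw [← Matrix.det_transpose]
  congr 1

open Matrix Finset in
lemma det_eq_pminor_col {m : ℕ} (M : Matrix (Fin m) (Fin m) ℝ) (s : Finset (Fin m))
    (h : ∀ j ∉ s, ∀ i, M i j = (Pi.single j 1 : Fin m → ℝ) i) : M.det = pminor M s := by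
  rw [← Matrix.det_transpose, det_eq_pminor_row Mᵀ s (fun j hj => funext fun i => h j hj i),
    pminor_transpose]

open Matrix Finset in
lemma sum_pminor {m : ℕ} (L : Matrix (Fin m) (Fin m) ℝ) (I : Finset (Fin m)) :
    ∑ A : Finset (Fin m), (if I ⊆ A then pminor L A else 0)
      = (L + Matrix.diagonal (fun i => if i ∈ I then 0 else 1)).det := by
  classical
  set D : Matrix (Fin m) (Fin m) ℝ := Matrix.diagonal (fun i => if i ∈ I then 0 else 1) with hD
  have key : (L + D).det = ∑ s : Finset (Fin m),
      (show Matrix (Fin m) (Fin m) ℝ from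
        Finset.piecewise s (fun i => L i) (fun i => D i)).det :=
    (Matrix.detRowAlternating (R := ℝ) (n := Fin m)).toMultilinearMap.map_add_univ
      (fun i => L i) (fun i => D i)
  rw [key]
  rw [eq_comm]
  refine Finset.sum_nbij' (fun s => s) (fun s => s) (by simp) (by simp) (by simp) (by simp) ?_
  intro s _
  by_cases hIs : I ⊆ s
  · rw [if_pos hIs]
    have hrow : ∀ i ∉ s, (Finset.piecewise s (fun i => L i) (fun i => D i)) i = Pi.single i 1 := by
      intro i hi
      rw [Finset.piecewise_eq_of_notMem _ _ _ hi]
      have hiI : i ∉ I := fun h => hi (hIs h)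
      funext j
      simp [D, Matrix.diagonal_apply, hiI, Pi.single_apply, eq_comm]
    rw [show (show Matrix (Fin m) (Fin m) ℝ from
            Finset.piecewise s (fun i => L i) (fun i => D i)).det
        = pminor (show Matrix (Fin m) (Fin m) ℝ from
            Finset.piecewise s (fun i => L i) (fun i => D i)) s
      from det_eq_pminor_row _ s hrow]
    unfold pminor
    congr 1
    ext i j
    show Finset.piecewise s (fun i => L i) (fun i => D i) (i : Fin m) (j : Fin m) = L i j
    rw [Finset.piecewise_eq_of_mem s _ _ i.2]
  · rw [if_neg hIs]
    obtain ⟨i, hiI, his⟩ := Finset.not_subset.mp hIs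
    have hzero : (Finset.piecewise s (fun i => L i) (fun i => D i)) i = 0 := by
      rw [Finset.piecewise_eq_of_notMem _ _ _ his]
      funext j
      simp [D, Matrix.diagonal_apply, hiI]
    exact Matrix.det_eq_zero_of_row_eq_zero i (fun j => congrFun hzero j)

open Matrix Finset in
lemma det_L_add_diag {m : ℕ} (L : Matrix (Fin m) (Fin m) ℝ) (hL : L.PosDef)
    (I : Finset (Fin m)) :
    (L + Matrix.diagonal (fun i => if i ∈ I then 0 else 1)).det
      = (L + 1).det * pminor (L * (L + 1)⁻¹) I := by
  classical
  have hM : (L + 1).PosDef := hL.add Matrix.PosDef.one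
  have hdet : IsUnit (L + 1).det := hM.det_pos.ne'.isUnit
  set N : Matrix (Fin m) (Fin m) ℝ := (L + 1)⁻¹ with hN
  set E : Matrix (Fin m) (Fin m) ℝ :=
    Matrix.diagonal (fun i => if i ∈ I then (1:ℝ) else 0) with hE
  have hLN : L * N = 1 - N := by
    have h1 : L = (L + 1) - 1 := by abel
    rw [h1, Matrix.sub_mul, Matrix.one_mul, hN, Matrix.mul_nonsing_inv _ hdet]
  have h1 : L + Matrix.diagonal (fun i => if i ∈ I then 0 else 1)
      = (L + 1) * (1 - N * E) := by
    rw [Matrix.mul_sub, Matrix.mul_one, ← Matrix.mul_assoc,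
      Matrix.mul_nonsing_inv _ hdet, Matrix.one_mul]
    ext i j
    simp only [Matrix.add_apply, Matrix.sub_apply, Matrix.diagonal_apply, Matrix.one_apply, hE]
    split_ifs <;> ring
  have h2 : (1 - N * E).det = pminor (1 - N * E) I := by
    refine det_eq_pminor_col _ I ?_
    intro j hj i
    simp [Matrix.sub_apply, Matrix.mul_diagonal, hE, hj, Matrix.one_apply,
      Pi.single_apply]
  have h3 : pminor (1 - N * E) I = pminor (L * N) I := by
    unfold pminor
    congr 1
    ext i j
    have hjI : (j : Fin m) ∈ I := j.2
    simp [Matrix.sub_apply, Matrix.mul_diagonal, hE, hjI, hLN]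
  rw [h1, Matrix.det_mul, h2, h3]

open Matrix Finset in
lemma dpp_marginal {m : ℕ} (L : Matrix (Fin m) (Fin m) ℝ) (hL : L.PosDef)
    (I : Finset (Fin m)) :
    ∑ A : Finset (Fin m), dppP L A * (if I ⊆ A then (1:ℝ) else 0)
      = pminor (L * (L + 1)⁻¹) I := by
  classical
  have hM : (L + 1).PosDef := hL.add Matrix.PosDef.one
  have hZ : (L + 1).det ≠ 0 := hM.det_pos.ne'
  have hterm : ∀ A : Finset (Fin m), dppP L A * (if I ⊆ A then (1:ℝ) else 0)
      = (if I ⊆ A then pminor L A else 0) / (L + 1).det := by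
    intro A
    unfold dppP
    split_ifs <;> simp
  rw [Finset.sum_congr rfl (fun A _ => hterm A), ← Finset.sum_div, sum_pminor,
    det_L_add_diag L hL I, mul_comm, mul_div_assoc, div_self hZ, mul_one]

theorem dpp_covariance_of_indicators (m : ℕ) (L : Matrix (Fin m) (Fin m) ℝ)
    (hsymm : L.IsSymm) (hL : L.PosDef)
    (K : Matrix (Fin m) (Fin m) ℝ) (hK : K = L * (L + 1)⁻¹)
    (I J : Finset (Fin m)) :
    (∑ A : Finset (Fin m),
        dppP L A * (if I ⊆ A then 1 else 0) * (if J ⊆ A then 1 else 0))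
      - (∑ A : Finset (Fin m), dppP L A * (if I ⊆ A then 1 else 0)) *
        (∑ A : Finset (Fin m), dppP L A * (if J ⊆ A then 1 else 0))
      = pminor K (I ∪ J) - pminor K I * pminor K J := by
  classical
  have hterm : ∀ A : Finset (Fin m),
      dppP L A * (if I ⊆ A then (1:ℝ) else 0) * (if J ⊆ A then (1:ℝ) else 0)
        = dppP L A * (if I ∪ J ⊆ A then (1:ℝ) else 0) := by
    intro A
    by_cases hI : I ⊆ A <;> by_cases hJ : J ⊆ A <;>
      simp [hI, hJ, Finset.union_subset_iff]
  rw [Finset.sum_congr rfl (fun A _ => hterm A), dpp_marginal L hL (I ∪ J),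
    dpp_marginal L hL I, dpp_marginal L hL J, hK]
end

section
/- Let L be a symmetric positive definite m×m real matrix with marginal kernel K := L(L + I)^{-1}, and let Y ∼ P_L. Then for every a ∈ {1,…,m} the variance of the indicator 1_{a∈Y} under P_L equals K_{aa}(1 − K_{aa}), and for every pair a ≠ b in {1,…,m} the covariance of 1_{a∈Y} and 1_{b∈Y} under P_L equals −(K_{ab})². -/
open Matrix Finset

section

variable {n R : Type*} [Fintype n] [DecidableEq n] [CommRing R]

theorem Matrix.det_add_diagonal_eq_sum_prod_mul_det_submatrix (M : Matrix n n R) (d : n → R) :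
    (M + diagonal d).det =
      ∑ s : Finset n, (∏ i ∈ sᶜ, d i) * (M.submatrix ((↑) : s → n) (↑)).det := by
  change detRowAlternating.toMultilinearMap (M.row + (diagonal d).row) = _
  rw [MultilinearMap.map_add_univ]
  refine sum_congr rfl fun s _ => ?_
  have hrows : s.piecewise M.row (diagonal d).row =
      sᶜ.piecewise (fun i => d i • s.piecewise M.row (1 : Matrix n n R).row i)
        (s.piecewise M.row (1 : Matrix n n R).row) := by
    ext i j
    by_cases hi : i ∈ s <;> simp [Finset.piecewise, hi, diagonal_apply, one_apply]
  rw [hrows, MultilinearMap.map_piecewise_smul, smul_eq_mul]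
  exact congrArg _ (det_piecewise_one_eq_submatrix_det M s)

theorem Matrix.of_piecewise_row_mul (s : Finset n) (A B N : Matrix n n R) :
    of (s.piecewise A.row B.row) * N = of (s.piecewise (A * N).row (B * N).row) := by
  ext i j
  by_cases hi : i ∈ s <;> simp [Finset.piecewise, hi, mul_apply]

theorem Matrix.mul_inv_add_one_eq_one_sub (L : Matrix n n R) (hL : IsUnit (L + 1).det) :
    L * (L + 1)⁻¹ = 1 - (L + 1)⁻¹ := by
  rw [eq_sub_iff_add_eq]
  nth_rw 2 [← Matrix.one_mul (L + 1)⁻¹]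
  rw [← Matrix.add_mul, mul_nonsing_inv _ hL]

end

theorem sum_pminor_mul_ite_subset {m : ℕ} (L : Matrix (Fin m) (Fin m) ℝ) (S : Finset (Fin m)) :
    ∑ A : Finset (Fin m), pminor L A * (if S ⊆ A then 1 else 0) =
      (L + diagonal fun i => if i ∈ S then 0 else 1).det := by
  rw [det_add_diagonal_eq_sum_prod_mul_det_submatrix]
  refine sum_congr rfl fun A _ => ?_
  have hprod : ∏ i ∈ Aᶜ, (if i ∈ S then (0 : ℝ) else 1) = if S ⊆ A then 1 else 0 := by
    simp [zero_pow_eq, disjoint_iff_inter_eq_empty.symm, disjoint_compl_left_iff]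
  rw [hprod, mul_comm]
  rfl

theorem sum_dppP_mul_ite_subset {m : ℕ} (L : Matrix (Fin m) (Fin m) ℝ) (hL : IsUnit (L + 1).det)
    (S : Finset (Fin m)) :
    ∑ A : Finset (Fin m), dppP L A * (if S ⊆ A then 1 else 0) =
      pminor (L * (L + 1)⁻¹) S := by
  have hK : L * (L + 1)⁻¹ * (L + 1) = L := by
    rw [Matrix.mul_assoc, nonsing_inv_mul _ hL, mul_one]
  have hfactor : (L + diagonal fun i => if i ∈ S then 0 else 1) =
      of (S.piecewise (L * (L + 1)⁻¹).row (1 : Matrix (Fin m) (Fin m) ℝ).row) * (L + 1) := by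
    rw [of_piecewise_row_mul, hK, one_mul]
    ext i j
    by_cases hi : i ∈ S <;> simp [Finset.piecewise, hi, diagonal_apply, one_apply]
  simp_rw [dppP, div_mul_eq_mul_div, ← sum_div, sum_pminor_mul_ite_subset, hfactor, det_mul,
    det_piecewise_one_eq_submatrix_det]
  exact mul_div_cancel_right₀ _ hL.ne_zero

theorem pminor_singleton {m : ℕ} (M : Matrix (Fin m) (Fin m) ℝ) (a : Fin m) :
    pminor M {a} = M a a :=
  det_unique _

theorem pminor_pair {m : ℕ} (M : Matrix (Fin m) (Fin m) ℝ) {a b : Fin m} (hab : a ≠ b) :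
    pminor M {a, b} = M a a * M b b - M a b * M b a := by
  let e : Fin 2 ≃ ({a, b} : Finset (Fin m)) :=
    Equiv.ofBijective ![⟨a, by simp⟩, ⟨b, by simp⟩] <| by
      refine ⟨fun i j hij => ?_, fun ⟨x, hx⟩ => ?_⟩
      · fin_cases i <;> fin_cases j <;> simp_all [Subtype.ext_iff, eq_comm]
      · rcases mem_insert.mp hx with rfl | hx
        · exact ⟨0, rfl⟩
        · exact ⟨1, by simp [(mem_singleton.mp hx).symm]⟩
  rw [pminor, ← det_submatrix_equiv_self e, det_fin_two]
  rfl

theorem ite_mem_mul_ite_mem {α R : Type*} [DecidableEq α] [MulZeroOneClass R] (a b : α)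
    (A : Finset α) :
    ((if a ∈ A then 1 else 0) * (if b ∈ A then 1 else 0) : R) =
      if {a, b} ⊆ A then 1 else 0 := by
  by_cases ha : a ∈ A <;> by_cases hb : b ∈ A <;> simp [ha, hb, insert_subset_iff]

theorem dpp_variance_covariance_singletons (m : ℕ) (L : Matrix (Fin m) (Fin m) ℝ)
    (hsymm : L.IsSymm) (hL : L.PosDef)
    (K : Matrix (Fin m) (Fin m) ℝ) (hK : K = L * (L + 1)⁻¹) :
    (∀ a : Fin m,
      (∑ A : Finset (Fin m), dppP L A * (if a ∈ A then 1 else 0) * (if a ∈ A then 1 else 0))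
        - (∑ A : Finset (Fin m), dppP L A * (if a ∈ A then 1 else 0)) *
          (∑ A : Finset (Fin m), dppP L A * (if a ∈ A then 1 else 0))
        = K a a * (1 - K a a)) ∧
    (∀ a b : Fin m, a ≠ b →
      (∑ A : Finset (Fin m), dppP L A * (if a ∈ A then 1 else 0) * (if b ∈ A then 1 else 0))
        - (∑ A : Finset (Fin m), dppP L A * (if a ∈ A then 1 else 0)) *
          (∑ A : Finset (Fin m), dppP L A * (if b ∈ A then 1 else 0))
        = -(K a b) ^ 2) := by
  have hunit : IsUnit (L + 1).det := (hL.add PosDef.one).det_pos.ne'.isUnit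
  have hKsymm : K.IsSymm := by
    rw [hK, mul_inv_add_one_eq_one_sub L hunit]
    exact isSymm_one.sub (hsymm.add isSymm_one).inv
  have hpair (a b : Fin m) :
      ∑ A : Finset (Fin m), dppP L A * (if a ∈ A then 1 else 0) * (if b ∈ A then 1 else 0) =
        pminor K {a, b} := by
    simp_rw [mul_assoc, ite_mem_mul_ite_mem, hK, sum_dppP_mul_ite_subset L hunit]
  have hsingle (a : Fin m) :
      ∑ A : Finset (Fin m), dppP L A * (if a ∈ A then 1 else 0) = K a a := by
    simp_rw [← singleton_subset_iff, hK, sum_dppP_mul_ite_subset L hunit, pminor_singleton]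
  refine ⟨fun a => ?_, fun a b hab => ?_⟩
  · rw [hpair, pair_eq_singleton, pminor_singleton, hsingle]
    ring
  · rw [hpair, pminor_pair K hab, hsingle, hsingle, hKsymm.apply a b]
    ring
end

section
/- Let L be a symmetric positive definite m×m real matrix and let E be a diagonal m×m matrix with strictly positive diagonal entries. Then for every subset I ⊆ {1,…,m} with |I| ≥ 2, ∑_{J ⊆ I} (−1)^{|I|−|J|} · log det((E L E)_J) = ∑_{J ⊆ I} (−1)^{|I|−|J|} · log det(L_J). In other words, the canonical interaction parameters θ^I (|I| ≥ 2) of the log-linear embedding of a determinantal point process are invariant under positive diagonal rescaling L ↦ ELE; equivalently, they do not depend on the item-wise (quality) parameters u^{α₁} = log L_{ii}, which is the fact underlying the vanishing of the e-embedding curvature components H^{(e)}_{α₁ α κ} in Corollary 3.3. -/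
/-!
Rescaling `L ↦ ELE` multiplies each principal minor `det L_J` by `∏_{j ∈ J} d_j²`, so
`log det (ELE)_J = log det L_J + ∑_{j ∈ J} 2 log d_j`. The added term is additive in `J`, and the
Möbius transform `∑_{J ⊆ I} (-1)^{|I|-|J|} f(J)` of an additive set function vanishes as soon as
`|I| ≥ 2`.
-/

open Matrix Finset

theorem neg_one_pow_sub_of_le {R : Type*} [Monoid R] [HasDistribNeg R] {m n : ℕ} (h : n ≤ m) :
    (-1 : R) ^ (m - n) = (-1) ^ m * (-1) ^ n := by
  obtain ⟨k, rfl⟩ := Nat.exists_eq_add_of_le h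
  rw [Nat.add_sub_cancel_left, pow_add, ((Commute.neg_one_left _).pow_left n).eq, mul_assoc,
    ← pow_add, (Even.add_self n).neg_one_pow, mul_one]

namespace Finset

variable {α R : Type*} [CommRing R]

theorem sum_powerset_neg_one_pow_card_mul_sum_eq_zero {s : Finset α} (hs : 2 ≤ #s)
    (c : α → R) : ∑ t ∈ s.powerset, (-1 : R) ^ #t * ∑ i ∈ t, c i = 0 := by
  classical
  obtain ⟨a, ha⟩ : s.Nonempty := card_pos.1 (by omega)
  have hne : (s.erase a).Nonempty := card_pos.1 (by rw [card_erase_of_mem ha]; omega)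
  have halt : ∑ t ∈ (s.erase a).powerset, (-1 : R) ^ #t = 0 := by
    simpa using congrArg (Int.cast : ℤ → R) (sum_powerset_neg_one_pow_card_of_nonempty hne)
  rw [← insert_erase ha, sum_powerset_insert (notMem_erase a s), ← sum_add_distrib]
  -- the terms of `t` and `insert a t` cancel up to the contribution of `c a`
  calc ∑ t ∈ (s.erase a).powerset, ((-1 : R) ^ #t * ∑ i ∈ t, c i
        + (-1) ^ #(insert a t) * ∑ i ∈ insert a t, c i)
      = ∑ t ∈ (s.erase a).powerset, -c a * (-1 : R) ^ #t := by
        refine sum_congr rfl fun t ht => ?_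
        have hat : a ∉ t := notMem_mono (mem_powerset.1 ht) (notMem_erase a s)
        rw [card_insert_of_notMem hat, sum_insert hat]
        ring
    _ = 0 := by rw [← mul_sum, halt, mul_zero]

theorem sum_powerset_neg_one_pow_card_sub_mul_sum_eq_zero {s : Finset α} (hs : 2 ≤ #s)
    (c : α → R) : ∑ t ∈ s.powerset, (-1 : R) ^ (#s - #t) * ∑ i ∈ t, c i = 0 := by
  rw [sum_congr rfl fun t ht => by
      rw [neg_one_pow_sub_of_le (card_le_card (mem_powerset.1 ht)), mul_assoc],
    ← mul_sum, sum_powerset_neg_one_pow_card_mul_sum_eq_zero hs, mul_zero]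

end Finset

namespace Matrix

variable {l n R : Type*} [Fintype n] [DecidableEq n] [Fintype l] [DecidableEq l]

theorem submatrix_diagonal_mul_mul_diagonal [Semiring R] (d e : n → R) (M : Matrix n n R)
    (f g : l → n) :
    (diagonal d * M * diagonal e).submatrix f g
      = diagonal (d ∘ f) * M.submatrix f g * diagonal (e ∘ g) := by
  ext i j
  simp [diagonal_mul, mul_diagonal]

theorem det_submatrix_diagonal_mul_mul_diagonal [CommRing R] (d e : n → R) (M : Matrix n n R)
    (f : l → n) :
    ((diagonal d * M * diagonal e).submatrix f f).det
      = (∏ i, d (f i)) * (∏ i, e (f i)) * (M.submatrix f f).det := by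
  rw [submatrix_diagonal_mul_mul_diagonal, det_mul, det_mul, det_diagonal, det_diagonal]
  simp only [Function.comp_apply]
  ring

end Matrix

theorem pminor_pos {m : ℕ} {M : Matrix (Fin m) (Fin m) ℝ} (hM : M.PosDef) (A : Finset (Fin m)) :
    0 < pminor M A :=
  (hM.submatrix Subtype.val_injective).det_pos

theorem pminor_diagonal_mul_mul_diagonal {m : ℕ} (d e : Fin m → ℝ) (M : Matrix (Fin m) (Fin m) ℝ)
    (A : Finset (Fin m)) :
    pminor (diagonal d * M * diagonal e) A = (∏ i ∈ A, d i) * (∏ i ∈ A, e i) * pminor M A := by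
  rw [pminor, det_submatrix_diagonal_mul_mul_diagonal, prod_coe_sort A d, prod_coe_sort A e,
    pminor]

theorem log_pminor_diagonal_mul_mul_diagonal {m : ℕ} {d e : Fin m → ℝ}
    {M : Matrix (Fin m) (Fin m) ℝ} {A : Finset (Fin m)} (hd : ∀ i ∈ A, d i ≠ 0)
    (he : ∀ i ∈ A, e i ≠ 0) (hM : pminor M A ≠ 0) :
    Real.log (pminor (diagonal d * M * diagonal e) A)
      = ∑ i ∈ A, (Real.log (d i) + Real.log (e i)) + Real.log (pminor M A) := by
  rw [pminor_diagonal_mul_mul_diagonal, Real.log_mul _ hM, Real.log_mul,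
    Real.log_prod hd, Real.log_prod he, sum_add_distrib]
  · exact prod_ne_zero_iff.2 hd
  · exact prod_ne_zero_iff.2 he
  · exact mul_ne_zero (prod_ne_zero_iff.2 hd) (prod_ne_zero_iff.2 he)

theorem theta_invariant_under_diagonal_scaling_general (m : ℕ) (L : Matrix (Fin m) (Fin m) ℝ)
    (hL : L.PosDef)
    (d : Fin m → ℝ) (hd : ∀ i, 0 < d i)
    (E : Matrix (Fin m) (Fin m) ℝ) (hE : E = Matrix.diagonal d)
    (I : Finset (Fin m)) (hI : 2 ≤ I.card) :
    ∑ J ∈ I.powerset, (-1 : ℝ) ^ (I.card - J.card) * Real.log (pminor (E * L * E) J)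
      = ∑ J ∈ I.powerset, (-1 : ℝ) ^ (I.card - J.card) * Real.log (pminor L J) := by
  subst hE
  have hlog (J : Finset (Fin m)) :
      Real.log (pminor (diagonal d * L * diagonal d) J)
        = ∑ i ∈ J, (Real.log (d i) + Real.log (d i)) + Real.log (pminor L J) :=
    log_pminor_diagonal_mul_mul_diagonal (fun i _ => (hd i).ne') (fun i _ => (hd i).ne')
      (pminor_pos hL J).ne'
  simp only [hlog, mul_add]
  rw [sum_add_distrib, sum_powerset_neg_one_pow_card_sub_mul_sum_eq_zero hI, zero_add]

theorem theta_invariant_under_diagonal_scaling (m : ℕ) (L : Matrix (Fin m) (Fin m) ℝ)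
    (hsymm : L.IsSymm) (hL : L.PosDef)
    (d : Fin m → ℝ) (hd : ∀ i, 0 < d i)
    (E : Matrix (Fin m) (Fin m) ℝ) (hE : E = Matrix.diagonal d)
    (I : Finset (Fin m)) (hI : 2 ≤ I.card) :
    ∑ J ∈ I.powerset, (-1 : ℝ) ^ (I.card - J.card) * Real.log (pminor (E * L * E) J)
      = ∑ J ∈ I.powerset, (-1 : ℝ) ^ (I.card - J.card) * Real.log (pminor L J) :=
  theta_invariant_under_diagonal_scaling_general m L hL d hd E hE I hI
end

section
/- Fix a symmetric positive definite m×m real matrix R with unit diagonal. Then the map ℝ^m → ℝ^m sending u to the diagonal (K(u)_{11},…,K(u)_{mm}) of the marginal kernel K(u) := L(u)(L(u) + I)^{-1} is injective. (This is the well-definedness of the mixed parameterization ω = (η_{\{1\}},…,η_{\{m\}}; u^{α₂}) of the determinantal point process model: given the pairwise parameters, the item-wise parameters u are in one-to-one correspondence with the diagonal marginal probabilities.) -/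
/-!
Expanding `det (L + I)` in principal minors and reading `(L + I)⁻¹ᵢᵢ` off the adjugate shows that
`K(u)ᵢᵢ` is the probability that `i ∈ S` under the law `P_u(S) ∝ det R_S · exp (∑_{j ∈ S} u_j)`,
an exponential family on subsets with positive base weights `det R_S`. Its mean parameters
determine its natural parameter: if `u ≠ v` had the same marginals, then
`X(S) = ∑_{j ∈ S} (u_j - v_j)` would have the same mean under `P_u` and `P_v`; but `P_u` is `P_v`
tilted by `exp X`, and tilting by an increasing function strictly raises the mean of a
non-constant `X` (Chebyshev's sum inequality).
-/

open Matrix Finset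

namespace Matrix

variable {n R : Type*} [DecidableEq n] [CommRing R]

def principalMinor (A : Matrix n n R) (s : Finset n) : R :=
  (A.submatrix (↑) (↑) : Matrix s s R).det

theorem principalMinor_updateRow_zero (A : Matrix n n R) (i : n) (s : Finset n) :
    (A.updateRow i 0).principalMinor s = if i ∈ s then 0 else A.principalMinor s := by
  unfold principalMinor
  split_ifs with hi
  · exact det_eq_zero_of_row_eq_zero ⟨i, hi⟩ fun j => by simp
  · congr 1
    ext a b
    simp [updateRow_ne (ne_of_mem_of_not_mem a.2 hi)]

theorem PosDef.principalMinor_pos {A : Matrix n n ℝ} (hA : A.PosDef) (s : Finset n) :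
    0 < A.principalMinor s :=
  (hA.submatrix Subtype.val_injective).det_pos

variable [Fintype n]

theorem principalMinor_diagonal_mul_mul_diagonal (d e : n → R) (A : Matrix n n R) (s : Finset n) :
    (diagonal d * A * diagonal e).principalMinor s =
      (∏ j ∈ s, d j) * (∏ j ∈ s, e j) * A.principalMinor s := by
  have : (diagonal d * A * diagonal e).submatrix ((↑) : s → n) (↑) =
      diagonal (fun j : s => d j) * A.submatrix (↑) (↑) * diagonal (fun j : s => e j) := by
    ext a b
    simp [mul_diagonal, diagonal_mul]
  rw [principalMinor, this, det_mul, det_mul, det_diagonal, det_diagonal, principalMinor,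
    prod_coe_sort s d, prod_coe_sort s e]
  ring

theorem det_add_one_eq_sum_principalMinor (A : Matrix n n R) :
    (A + 1).det = ∑ s : Finset n, A.principalMinor s := by
  simp_rw [principalMinor, ← det_piecewise_one_eq_submatrix_det]
  exact detRowAlternating.map_add_univ A.row (1 : Matrix n n R).row

theorem adjugate_add_one_apply_self (A : Matrix n n R) (i : n) :
    (A + 1).adjugate i i = ∑ s with i ∉ s, A.principalMinor s := by
  have : (A + 1).updateRow i (Pi.single i 1) = A.updateRow i 0 + 1 := by
    ext a b
    by_cases ha : a = i
    · subst ha; simp [one_apply, Pi.single_apply, eq_comm]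
    · simp [updateRow_ne ha]
  rw [adjugate_apply, this, det_add_one_eq_sum_principalMinor, sum_filter]
  simp_rw [principalMinor_updateRow_zero, ite_not]

theorem mul_inv_add_one_apply_self {K : Type*} [Field K] (A : Matrix n n K) (i : n) :
    (A * (A + 1)⁻¹) i i =
      (∑ s with i ∈ s, A.principalMinor s) / ∑ s, A.principalMinor s := by
  have hsplit := sum_filter_add_sum_filter_not univ (i ∈ ·) A.principalMinor
  rw [← det_add_one_eq_sum_principalMinor] at hsplit ⊢
  by_cases h : IsUnit (A + 1).det
  · have hinv : A * (A + 1)⁻¹ = 1 - (A + 1)⁻¹ := by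
      rw [eq_sub_iff_add_eq, ← add_one_mul, mul_nonsing_inv _ h]
    rw [hinv, sub_apply, inv_def, smul_apply, adjugate_add_one_apply_self, Ring.inverse_eq_inv',
      one_apply_eq, smul_eq_mul, eq_div_iff h.ne_zero]
    field_simp [h.ne_zero]
    linear_combination -hsplit
  · -- both sides are junk `0`
    rw [nonsing_inv_apply_not_isUnit _ h]
    rw [isUnit_iff_ne_zero, not_not] at h
    rw [h, mul_zero, div_zero, zero_apply]

end Matrix

section Ordered

variable {α : Type*} [CommRing α] [LinearOrder α] [IsStrictOrderedRing α] {g : α → α}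

theorem Monotone.sub_mul_sub_nonneg (hg : Monotone g) (x y : α) :
    0 ≤ (x - y) * (g x - g y) := by
  rcases le_total x y with h | h
  · exact mul_nonneg_of_nonpos_of_nonpos (sub_nonpos.2 h) (sub_nonpos.2 (hg h))
  · exact mul_nonneg (sub_nonneg.2 h) (sub_nonneg.2 (hg h))

theorem StrictMono.sub_mul_sub_pos (hg : StrictMono g) {x y : α} (h : x ≠ y) :
    0 < (x - y) * (g x - g y) := by
  rcases h.lt_or_gt with h | h
  · exact mul_pos_of_neg_of_neg (sub_neg.2 h) (sub_neg.2 (hg h))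
  · exact mul_pos (sub_pos.2 h) (sub_pos.2 (hg h))

theorem sum_mul_sum_lt_sum_mul_sum_of_strictMono {ι : Type*} [Fintype ι] {w X : ι → α}
    (hg : StrictMono g) (hw : ∀ i, 0 < w i) {i₀ j₀ : ι} (hX : X i₀ ≠ X j₀) :
    (∑ i, X i * w i) * (∑ i, w i * g (X i)) < (∑ i, X i * (w i * g (X i))) * ∑ i, w i := by
  set F : ι → ι → α := fun i j => w i * w j * ((X i - X j) * (g (X i) - g (X j)))
  have hF : ∀ i j, 0 ≤ F i j := fun i j =>
    mul_nonneg (mul_pos (hw i) (hw j)).le (hg.monotone.sub_mul_sub_nonneg _ _)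
  have hF₀ : 0 < F i₀ j₀ := mul_pos (mul_pos (hw i₀) (hw j₀)) (hg.sub_mul_sub_pos hX)
  have hsum_pos : 0 < ∑ i, ∑ j, F i j :=
    sum_pos' (fun i _ => sum_nonneg fun j _ => hF i j)
      ⟨i₀, mem_univ _, sum_pos' (fun j _ => hF i₀ j) ⟨j₀, mem_univ _, hF₀⟩⟩
  have hsum : ∑ i, ∑ j, F i j = 2 * ((∑ i, X i * (w i * g (X i))) * (∑ i, w i) -
      (∑ i, X i * w i) * (∑ i, w i * g (X i))) := by
    have hexpand : ∀ i j, F i j = X i * (w i * g (X i)) * w j - X i * w i * (w j * g (X j)) -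
        w i * g (X i) * (X j * w j) + w i * (X j * (w j * g (X j))) := fun i j => by ring
    simp only [hexpand, sum_add_distrib, sum_sub_distrib, ← mul_sum, ← sum_mul]
    ring
  linarith

end Ordered

open Real

section InclusionProb

variable {ι : Type*} [Fintype ι] [DecidableEq ι]

theorem sum_mul_sum_filter_mem {R : Type*} [NonUnitalNonAssocSemiring R] (d : ι → R)
    (c : Finset ι → R) :
    ∑ i, d i * ∑ s with i ∈ s, c s = ∑ s, (∑ j ∈ s, d j) * c s := by
  simp_rw [mul_sum, sum_filter, sum_mul]
  rw [sum_comm]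
  simp_rw [← sum_filter, filter_mem_eq_inter, univ_inter]

noncomputable def inclusionProb (w : Finset ι → ℝ) (u : ι → ℝ) (i : ι) : ℝ :=
  (∑ s with i ∈ s, w s * exp (∑ j ∈ s, u j)) / ∑ s, w s * exp (∑ j ∈ s, u j)

theorem sum_mul_inclusionProb (w : Finset ι → ℝ) (u d : ι → ℝ) :
    ∑ i, d i * inclusionProb w u i =
      (∑ s, (∑ j ∈ s, d j) * (w s * exp (∑ j ∈ s, u j))) / ∑ s, w s * exp (∑ j ∈ s, u j) := by
  simp_rw [inclusionProb, mul_div_assoc', ← sum_div, sum_mul_sum_filter_mem]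

theorem inclusionProb_injective {w : Finset ι → ℝ} (hw : ∀ s, 0 < w s) :
    Function.Injective (inclusionProb w) := by
  intro u v huv
  by_contra hne
  obtain ⟨i₀, hi₀⟩ := Function.ne_iff.mp hne
  set X : Finset ι → ℝ := fun s => ∑ j ∈ s, (u - v) j
  set p : Finset ι → ℝ := fun s => w s * exp (∑ j ∈ s, v j)
  have hp : ∀ s, 0 < p s := fun s => mul_pos (hw s) (exp_pos _)
  have hu : ∀ s, w s * exp (∑ j ∈ s, u j) = p s * exp (X s) := fun s => by
    simp only [p, X, Pi.sub_apply, sum_sub_distrib, mul_assoc, ← exp_add, add_sub_cancel]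
  have hv : ∀ s, w s * exp (∑ j ∈ s, v j) = p s := fun _ => rfl
  have hX : ∀ s, ∑ j ∈ s, (u - v) j = X s := fun _ => rfl
  have hmean := congrArg (fun f => ∑ i, (u - v) i * f i) huv
  simp only [sum_mul_inclusionProb, hu, hv, hX] at hmean
  rw [div_eq_div_iff (sum_pos (fun s _ => mul_pos (hp s) (exp_pos _)) univ_nonempty).ne'
    (sum_pos (fun s _ => hp s) univ_nonempty).ne'] at hmean
  have hlt := sum_mul_sum_lt_sum_mul_sum_of_strictMono exp_strictMono hp
    (X := X) (i₀ := {i₀}) (j₀ := ∅) (by simpa [X, sub_eq_zero] using hi₀)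
  linarith

end InclusionProb

theorem principalMinor_Lmat {m : ℕ} (R : Matrix (Fin m) (Fin m) ℝ) (u : Fin m → ℝ)
    (s : Finset (Fin m)) :
    (Lmat R u).principalMinor s = R.principalMinor s * exp (∑ j ∈ s, u j) := by
  rw [Lmat, principalMinor_diagonal_mul_mul_diagonal, ← prod_mul_distrib]
  simp_rw [← exp_add, add_halves, ← exp_sum, mul_comm]

theorem Kmat_apply_self {m : ℕ} (R : Matrix (Fin m) (Fin m) ℝ) (u : Fin m → ℝ) (i : Fin m) :
    Kmat R u i i = inclusionProb R.principalMinor u i := by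
  simp_rw [Kmat, mul_inv_add_one_apply_self, principalMinor_Lmat, inclusionProb]

theorem mixed_parameterization_injective_general (m : ℕ)
    (R : Matrix (Fin m) (Fin m) ℝ) (hR : R.PosDef) :
    Function.Injective (fun (u : Fin m → ℝ) => fun a : Fin m => Kmat R u a a) := by
  simp_rw [Kmat_apply_self]
  exact inclusionProb_injective hR.principalMinor_pos

theorem mixed_parameterization_injective (m : ℕ)
    (R : Matrix (Fin m) (Fin m) ℝ) (hsymm : R.IsSymm) (hR : R.PosDef)
    (hdiag : ∀ i, R i i = 1) :
    Function.Injective (fun (u : Fin m → ℝ) => fun a : Fin m => Kmat R u a a) :=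
  mixed_parameterization_injective_general m R hR
end

section
/- Fix a symmetric positive definite m×m real matrix R with unit diagonal. Then the conditional potential function ψ : ℝ^m → ℝ defined by ψ(u) := log det(L(u) + I) is strictly convex on ℝ^m. -/
open Matrix Finset Real

theorem Matrix.det_add_one_eq_sum_det_submatrix {n R : Type*} [Fintype n] [DecidableEq n]
    [CommRing R] (M : Matrix n n R) :
    (M + 1).det = ∑ s : Finset n, (M.submatrix ((↑) : s → n) (↑)).det := by
  rw [← sum_congr rfl fun s _ => det_piecewise_one_eq_submatrix_det M s]
  exact (detRowAlternating (n := n) (R := R)).map_add_univ M.row (1 : Matrix n n R).row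

theorem Matrix.det_submatrix_diagonal_mul_mul_diagonal_s11 {n R : Type*} [Fintype n]
    [DecidableEq n] [CommRing R] (d : n → R) (A : Matrix n n R) (s : Finset n) :
    ((diagonal d * A * diagonal d).submatrix ((↑) : s → n) (↑)).det
      = (∏ i ∈ s, d i) ^ 2 * (A.submatrix ((↑) : s → n) (↑)).det := by
  have : (diagonal d * A * diagonal d).submatrix ((↑) : s → n) (↑)
      = diagonal (fun i : s => d i) * A.submatrix (↑) (↑) * diagonal (fun i : s => d i) := by
    ext i j
    simp [mul_diagonal, diagonal_mul]
  rw [this, det_mul, det_mul, det_diagonal, prod_coe_sort s d]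
  ring

theorem Real.sum_rpow_mul_rpow_lt {ι : Type*} [Fintype ι] {p q : ι → ℝ}
    (hp : ∀ k, 0 < p k) (hq : ∀ k, 0 < q k) {a b : ℝ} (ha : 0 < a) (hb : 0 < b)
    (hab : a + b = 1) (hpq : ∃ k, p k / ∑ j, p j ≠ q k / ∑ j, q j) :
    ∑ k, p k ^ a * q k ^ b < (∑ k, p k) ^ a * (∑ k, q k) ^ b := by
  obtain ⟨k₀, hk₀⟩ := hpq
  have : Nonempty ι := ⟨k₀⟩
  set P := ∑ k, p k
  set Q := ∑ k, q k
  have hP : 0 < P := sum_pos (fun k _ => hp k) univ_nonempty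
  have hQ : 0 < Q := sum_pos (fun k _ => hq k) univ_nonempty
  have hsplit (k : ι) :
      p k ^ a * q k ^ b = (p k / P) ^ a * (q k / Q) ^ b * (P ^ a * Q ^ b) := by
    rw [div_rpow (hp k).le hP.le, div_rpow (hq k).le hQ.le]
    field_simp
  have hamgm (k : ι) : (p k / P) ^ a * (q k / Q) ^ b ≤ a * (p k / P) + b * (q k / Q) :=
    geom_mean_le_arith_mean2_weighted ha.le hb.le (div_pos (hp k) hP).le
      (div_pos (hq k) hQ).le hab
  have hamgm_lt : (p k₀ / P) ^ a * (q k₀ / Q) ^ b < a * (p k₀ / P) + b * (q k₀ / Q) :=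
    (geom_mean_lt_arith_mean2_weighted_iff_of_pos ha hb (div_pos (hp k₀) hP).le
      (div_pos (hq k₀) hQ).le hab).2 hk₀
  have hmass : ∑ k, (a * (p k / P) + b * (q k / Q)) = 1 := by
    rw [sum_add_distrib, ← mul_sum, ← mul_sum, ← sum_div, ← sum_div, div_self hP.ne',
      div_self hQ.ne', mul_one, mul_one, hab]
  calc ∑ k, p k ^ a * q k ^ b
      = (∑ k, (p k / P) ^ a * (q k / Q) ^ b) * (P ^ a * Q ^ b) := by
        rw [sum_mul]; exact sum_congr rfl fun k _ => hsplit k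
    _ < (∑ k, (a * (p k / P) + b * (q k / Q))) * (P ^ a * Q ^ b) := by
        refine mul_lt_mul_of_pos_right ?_ (by positivity)
        exact sum_lt_sum (fun k _ => hamgm k) ⟨k₀, mem_univ _, hamgm_lt⟩
    _ = P ^ a * Q ^ b := by rw [hmass, one_mul]

theorem Real.mul_exp_add_eq_mul_rpow {c s t a b : ℝ} (hc : 0 < c) (hab : a + b = 1) :
    c * exp (a * s + b * t) = (c * exp s) ^ a * (c * exp t) ^ b := by
  rw [mul_rpow hc.le (exp_pos s).le, mul_rpow hc.le (exp_pos t).le, ← exp_mul, ← exp_mul,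
    exp_add]
  calc c * (exp (a * s) * exp (b * t)) = c ^ (a + b) * (exp (s * a) * exp (t * b)) := by
        rw [hab, rpow_one, mul_comm a, mul_comm b]
    _ = _ := by rw [rpow_add hc]; ring

theorem strictConvexOn_log_sum_mul_exp {ι E : Type*} [Fintype ι] [AddCommGroup E]
    [Module ℝ E] {c : ι → ℝ} (hc : ∀ k, 0 < c k) (ℓ : ι → Module.Dual ℝ E)
    (hℓ : ∀ v, (∀ j k, ℓ j v = ℓ k v) → v = 0) :
    StrictConvexOn ℝ Set.univ fun x => log (∑ k, c k * exp (ℓ k x)) := by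
  refine ⟨convex_univ, fun x _ y _ hxy a b ha hb hab => ?_⟩
  obtain ⟨j₀, k₀, hjk⟩ : ∃ j k, ℓ j (x - y) ≠ ℓ k (x - y) := by
    by_contra! h
    exact sub_ne_zero.2 hxy (hℓ _ h)
  have : Nonempty ι := ⟨j₀⟩
  set p : ι → ℝ := fun k => c k * exp (ℓ k x)
  set q : ι → ℝ := fun k => c k * exp (ℓ k y)
  have hp (k : ι) : 0 < p k := mul_pos (hc k) (exp_pos _)
  have hq (k : ι) : 0 < q k := mul_pos (hc k) (exp_pos _)
  have hP : 0 < ∑ k, p k := sum_pos (fun k _ => hp k) univ_nonempty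
  have hQ : 0 < ∑ k, q k := sum_pos (fun k _ => hq k) univ_nonempty
  have hpq : ∃ k, p k / ∑ j, p j ≠ q k / ∑ j, q j := by
    by_contra! hprop
    have hratio (k : ι) : exp (ℓ k (x - y)) = (∑ j, p j) / ∑ j, q j := by
      rw [← (div_eq_div_iff_div_eq_div' hP.ne' (hq k).ne').1 (hprop k), map_sub, exp_sub]
      exact (mul_div_mul_left _ _ (hc k).ne').symm
    exact hjk (exp_injective ((hratio j₀).trans (hratio k₀).symm))
  calc log (∑ k, c k * exp (ℓ k (a • x + b • y)))
      = log (∑ k, p k ^ a * q k ^ b) := by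
        simp only [map_add, map_smul, smul_eq_mul, p, q, mul_exp_add_eq_mul_rpow (hc _) hab]
    _ < log ((∑ k, p k) ^ a * (∑ k, q k) ^ b) :=
        log_lt_log (sum_pos (fun k _ => by have := hp k; have := hq k; positivity) univ_nonempty)
          (sum_rpow_mul_rpow_lt hp hq ha hb hab hpq)
    _ = a • log (∑ k, p k) + b • log (∑ k, q k) := by
        rw [log_mul (rpow_pos_of_pos hP a).ne' (rpow_pos_of_pos hQ b).ne', log_rpow hP,
          log_rpow hQ, smul_eq_mul, smul_eq_mul]

theorem det_Lmat_add_one {m : ℕ} (R : Matrix (Fin m) (Fin m) ℝ) (u : Fin m → ℝ) :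
    (Lmat R u + 1).det = ∑ s : Finset (Fin m),
      (R.submatrix ((↑) : s → Fin m) (↑)).det * exp (∑ i ∈ s, u i) := by
  refine (det_add_one_eq_sum_det_submatrix _).trans (sum_congr rfl fun s _ => ?_)
  rw [Lmat, det_submatrix_diagonal_mul_mul_diagonal_s11, ← exp_sum, sq, ← exp_add,
    ← sum_add_distrib, mul_comm]
  simp only [add_halves]

theorem psi_strictConvexOn_general (m : ℕ)
    (R : Matrix (Fin m) (Fin m) ℝ) (hR : R.PosDef) :
    StrictConvexOn ℝ Set.univ (psi R) := by
  let ℓ (s : Finset (Fin m)) : Module.Dual ℝ (Fin m → ℝ) := ∑ i ∈ s, LinearMap.proj i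
  have hℓ (s : Finset (Fin m)) (u : Fin m → ℝ) : ℓ s u = ∑ i ∈ s, u i := by
    simp [ℓ]
  have hminor (s : Finset (Fin m)) : 0 < (R.submatrix ((↑) : s → Fin m) (↑)).det :=
    (hR.submatrix Subtype.val_injective).det_pos
  have hsep (v : Fin m → ℝ) (hv : ∀ s t, ℓ s v = ℓ t v) : v = 0 :=
    funext fun i => by simpa [hℓ] using hv {i} ∅
  have hψ : psi R = fun u => log (∑ s : Finset (Fin m),
      (R.submatrix ((↑) : s → Fin m) (↑)).det * exp (ℓ s u)) := by
    ext u
    simp only [psi, det_Lmat_add_one, hℓ]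
  rw [hψ]
  exact strictConvexOn_log_sum_mul_exp hminor ℓ hsep

theorem psi_strictConvexOn (m : ℕ)
    (R : Matrix (Fin m) (Fin m) ℝ) (hsymm : R.IsSymm) (hR : R.PosDef)
    (hdiag : ∀ i, R i i = 1) :
    StrictConvexOn ℝ Set.univ (psi R) :=
  psi_strictConvexOn_general m R hR
end
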